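/- Let A be a radical Archimedean ordered *-algebra and a, b ∈ A Hermitian with ab = ba. Suppose x ∈ A is Hermitian, lies in the bicommutant {a,b}'', and satisfies x² + ab = x(a+b) together with 2x ≥ a + b (i.e. x = a ∨ b). Then y := a + b - x is Hermitian, lies in {a,b}'', satisfies y² + ab = y(a+b) and 2y ≤ a + b (i.e. y = a ∧ b), and moreover x·y = ab. -/
import Mathlib


/-- The commutant of a subset `S` of a ring: all elements commuting with every
element of `S`. The bicommutant of `S` is `commutant (commutant S)`. -/
def commutant {A : Type*} [Ring A] (S : Set A) : Set A :=
  {x : A | ∀ s ∈ S, s * x = x * s}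

/-- A quasi-ordered `*`-algebra: a unital associative complex `*`-algebra `A`
equipped with a quasi-order (reflexive and transitive relation) `qle` on its
Hermitian elements such that for Hermitian `a, b, c` with `a ≼ b` and all `d`:
`a + c ≼ b + c`, `d* a d ≼ d* b d`, and `0 ≼ 1`. -/
class QuasiOrderedStarAlgebra (A : Type*) [Ring A] [Algebra ℂ A] [StarRing A] where
  qle : A → A → Prop
  qle_refl : ∀ a : A, IsSelfAdjoint a → qle a a
  qle_trans : ∀ a b c : A, IsSelfAdjoint a → IsSelfAdjoint b → IsSelfAdjoint c →
    qle a b → qle b c → qle a c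
  qle_add_right : ∀ a b c : A, IsSelfAdjoint a → IsSelfAdjoint b → IsSelfAdjoint c →
    qle a b → qle (a + c) (b + c)
  qle_conj : ∀ a b : A, IsSelfAdjoint a → IsSelfAdjoint b → qle a b →
    ∀ d : A, qle (star d * a * d) (star d * b * d)
  qle_zero_one : qle (0 : A) (1 : A)

/-- An ordered `*`-algebra: a quasi-ordered `*`-algebra whose order is
antisymmetric on Hermitian elements, i.e. a partial order. -/
class OrderedStarAlgebra (A : Type*) [Ring A] [Algebra ℂ A] [StarRing A]
    extends QuasiOrderedStarAlgebra A where
  qle_antisymm : ∀ a b : A, IsSelfAdjoint a → IsSelfAdjoint b →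
    qle a b → qle b a → a = b

namespace QuasiOrderedStarAlgebra

scoped infix:50 " ≼ " => QuasiOrderedStarAlgebra.qle

section
variable {A : Type*} [Ring A] [Algebra ℂ A] [StarRing A] [QuasiOrderedStarAlgebra A]

/-- A Hermitian element `a` is coercive if `ε·1 ≼ a` for some real `ε > 0`. -/
def Coercive (a : A) : Prop :=
  ∃ ε : ℝ, 0 < ε ∧ ((ε : ℂ) • (1 : A)) ≼ a

end

section
variable (A : Type*) [Ring A] [Algebra ℂ A] [StarRing A] [QuasiOrderedStarAlgebra A]

/-- Archimedean: whenever `a ≼ ε • b` for all real `ε > 0` (with `a`, `b`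
Hermitian), then `a ≼ 0`. -/
def IsArchimedeanOrder : Prop :=
  ∀ a b : A, IsSelfAdjoint a → IsSelfAdjoint b →
    (∀ ε : ℝ, 0 < ε → a ≼ ((ε : ℂ) • b)) → a ≼ 0

/-- Radical: for all commuting Hermitian `a`, `b` with `a` coercive and
`0 ≼ a * b`, one has `0 ≼ b`. -/
def IsRadicalOrder : Prop :=
  ∀ a b : A, IsSelfAdjoint a → IsSelfAdjoint b → a * b = b * a →
    Coercive a → (0 : A) ≼ a * b → (0 : A) ≼ b

/-- Uniform completeness: every uniformly Cauchy sequence converges uniformly. -/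
def UniformlyComplete : Prop :=
  ∀ u : ℕ → A,
    (∀ ε : ℝ, 0 < ε → ∃ N : ℕ, ∀ m n : ℕ, N ≤ m → N ≤ n →
      (star (u m - u n) * (u m - u n)) ≼ (((ε ^ 2 : ℝ) : ℂ) • (1 : A))) →
    ∃ l : A, ∀ ε : ℝ, 0 < ε → ∃ N : ℕ, ∀ n : ℕ, N ≤ n →
      (star (l - u n) * (l - u n)) ≼ (((ε ^ 2 : ℝ) : ℂ) • (1 : A))

end

end QuasiOrderedStarAlgebra

open QuasiOrderedStarAlgebra

/-- In a radical Archimedean ordered *-algebra, if `x = a ∨ b`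
for commuting Hermitian `a, b` (i.e. `x` Hermitian in the bicommutant of
`{a,b}` with `x² + ab = x(a+b)` and `2x ≥ a+b`), then `y := a + b - x` is
`a ∧ b` (Hermitian, in the bicommutant, `y² + ab = y(a+b)`, `2y ≤ a+b`) and
`x·y = ab`. -/
theorem statement16 {A : Type*} [Ring A] [Algebra ℂ A] [StarRing A]
    [OrderedStarAlgebra A] (hArch : IsArchimedeanOrder A) (hRad : IsRadicalOrder A)
    (a b : A) (ha : IsSelfAdjoint a) (hb : IsSelfAdjoint b) (hab : a * b = b * a)
    (x : A) (hx : IsSelfAdjoint x)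
    (hxbi : x ∈ commutant (commutant ({a, b} : Set A)))
    (hxeq : x ^ 2 + a * b = x * (a + b))
    (hxge : (a + b) ≼ ((2 : ℂ) • x)) :
    IsSelfAdjoint (a + b - x) ∧
    (a + b - x) ∈ commutant (commutant ({a, b} : Set A)) ∧
    (a + b - x) ^ 2 + a * b = (a + b - x) * (a + b) ∧
    ((2 : ℂ) • (a + b - x)) ≼ (a + b) ∧
    x * (a + b - x) = a * b := by
  have haC : a ∈ commutant ({a, b} : Set A) := by
    intro s hs
    rcases hs with rfl | rfl
    · rfl
    · exact hab.symm
  have hbC : b ∈ commutant ({a, b} : Set A) := by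
    intro s hs
    rcases hs with rfl | rfl
    · exact hab
    · rfl
  have hax : a * x = x * a := hxbi a haC
  have hbx : b * x = x * b := hxbi b hbC
  have hc : (a + b) * x = x * (a + b) := by rw [add_mul, mul_add, hax, hbx]
  have hsab : IsSelfAdjoint (a + b) := ha.add hb
  have h2x : IsSelfAdjoint ((2 : ℂ) • x) := by
    rw [two_smul]
    exact hx.add hx
  refine ⟨hsab.sub hx, ?_, ?_, ?_, ?_⟩
  · intro s hs
    have h1 : a * s = s * a := hs a (Set.mem_insert _ _)
    have h2 : b * s = s * b := hs b (by simp)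
    have h3 : s * x = x * s := hxbi s hs
    rw [mul_sub, mul_add, sub_mul, add_mul, ← h1, ← h2, h3]
  · have e : (a + b - x) ^ 2 + a * b
        = (a + b) * (a + b) - (a + b) * x - x * (a + b) + (x ^ 2 + a * b) := by
      noncomm_ring
    rw [e, hxeq, hc]
    noncomm_ring
  · have key := QuasiOrderedStarAlgebra.qle_add_right (a + b) ((2 : ℂ) • x)
      ((a + b) - (2 : ℂ) • x) hsab h2x (hsab.sub h2x) hxge
    have e1 : (2 : ℂ) • (a + b - x) = (a + b) + ((a + b) - (2 : ℂ) • x) := by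
      module
    have e2 : (2 : ℂ) • x + ((a + b) - (2 : ℂ) • x) = a + b := by
      module
    rw [e2] at key
    rw [e1]
    exact key
  · have e : x * (a + b - x) = x * (a + b) - x ^ 2 := by
      rw [mul_sub, sq]
    rw [e, ← hxeq]
    noncomm_ring
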